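/- Density of genetic-marker locations (odometer vs. circular words): let (W_n) be an odometer based construction sequence with coefficients (k_n), (k_n, l_n) a circular coefficient sequence, c_n: W_n → W_n^c the induced bijections. Fix n ≤ m, w ∈ W_m, w^c = c_m(w), a set S* of (n,m)-genetic markers, g = ∏_{i=n}^{m−1} k_i the total number of (n,m)-genetic markers, and d = |S*|/g. Let A = {j ∈ [0, K_m) : an n-subword of w with genetic marker in S* begins at j} and A^c = {j ∈ [0, q_m) : a designated n-subword of w^c with genetic marker in S* begins at j}. Then |A|/K_m = d/K_n and |A^c|/q_m = (d/q_n)·∏_{p=n}^{m−1}(1 − 1/l_p). -/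
import Mathlib


/-!
STATEMENT 10: Density of genetic-marker locations in odometer vs. circular words.
-/

namespace Stmt10

/-- `K_0 = 1`, `K_{n+1} = K_n k_n`: lengths of the odometer based words. -/
def KSeq (k : ℕ → ℕ) : ℕ → ℕ
  | 0 => 1
  | n + 1 => KSeq k n * k n

/-- `q_0 = 1`, `q_{n+1} = k_n l_n q_n²`: lengths of the circular words. -/
def qSeq (k l : ℕ → ℕ) : ℕ → ℕ
  | 0 => 1
  | n + 1 => k n * l n * (qSeq k l n) ^ 2

/-- `p_0 = 0`, `p_{n+1} = p_n q_n k_n l_n + 1`. -/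
def pSeq (k l : ℕ → ℕ) : ℕ → ℕ
  | 0 => 0
  | n + 1 => pSeq k l n * qSeq k l n * k n * l n + 1

/-- `j_i = (p⁻¹ · i) mod q`. -/
def jW (p q i : ℕ) : ℕ := (((p : ZMod q))⁻¹ * (i : ZMod q)).val

/-- Starting position of the `c`-th designated copy of the `t`-th argument within the `i`-th
2-subsection of a circular word with parameters `q, kk, ll`. -/
def blockOffset (q kk ll : ℕ) (j : ℕ → ℕ) (i t c : ℕ) : ℕ :=
  (i * kk + t) * (ll * q) + (q - j i) + c * q

/-- Starting positions of the designated occurrences of `n`-subwords with genetic marker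
`⟨J n, …, J (n+d−1)⟩` inside a word of `W_{n+d}^c`, defined recursively following the
circular operators `C_r`. -/
def markPos (k l : ℕ → ℕ) (n : ℕ) (J : ℕ → ℕ) : ℕ → Finset ℕ
  | 0 => {0}
  | d + 1 =>
      (Finset.range (qSeq k l (n + d)) ×ˢ Finset.range (l (n + d) - 1)).biUnion
        fun ic => (markPos k l n J d).image fun x =>
          blockOffset (qSeq k l (n + d)) (k (n + d)) (l (n + d))
            (jW (pSeq k l (n + d)) (qSeq k l (n + d))) ic.1 (J (n + d)) ic.2 + x


/-! ### auxiliary lemmas -/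

lemma euclid {M a b r s : ℕ} (hr : r < M) (hs : s < M)
    (h : a * M + r = b * M + s) : a = b ∧ r = s := by
  have hab : a = b := by
    rcases Nat.lt_trichotomy a b with h1 | h1 | h1
    · exfalso
      have h2 : (a + 1) * M ≤ b * M := Nat.mul_le_mul_right M h1
      have e : (a + 1) * M = a * M + M := by ring
      omega
    · exact h1
    · exfalso
      have h2 : (b + 1) * M ≤ a * M := Nat.mul_le_mul_right M h1
      have e : (b + 1) * M = b * M + M := by ring
      omega
  subst hab
  omega

lemma KSeq_pos (k : ℕ → ℕ) (hk : ∀ n, 2 ≤ k n) (n : ℕ) : 0 < KSeq k n := by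
  induction n with
  | zero => simp [KSeq]
  | succ n ih =>
    have := hk n
    simp only [KSeq]
    exact Nat.mul_pos ih (by omega)

lemma qSeq_pos (k l : ℕ → ℕ) (hk : ∀ n, 2 ≤ k n) (hl : ∀ n, 2 ≤ l n) (n : ℕ) :
    0 < qSeq k l n := by
  induction n with
  | zero => simp [qSeq]
  | succ n ih =>
    have h1 := hk n
    have h2 := hl n
    simp only [qSeq]
    exact Nat.mul_pos (Nat.mul_pos (by omega) (by omega)) (pow_pos ih 2)

lemma KSeq_prod (k : ℕ → ℕ) {n m : ℕ} (h : n ≤ m) :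
    KSeq k m = KSeq k n * ∏ i ∈ Finset.Ico n m, k i := by
  induction m, h using Nat.le_induction with
  | base => simp
  | succ m hm ih =>
    rw [Finset.prod_Ico_succ_top hm, show KSeq k (m + 1) = KSeq k m * k m from rfl, ih]
    ring

lemma qSeq_prod (k l : ℕ → ℕ) {n m : ℕ} (h : n ≤ m) :
    qSeq k l m = qSeq k l n * ∏ i ∈ Finset.Ico n m, (k i * l i * qSeq k l i) := by
  induction m, h using Nat.le_induction with
  | base => simp
  | succ m hm ih =>
    have e : qSeq k l (m + 1) = qSeq k l m * (k m * l m * qSeq k l m) := by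
      show k m * l m * (qSeq k l m) ^ 2 = _
      ring
    rw [Finset.prod_Ico_succ_top hm, e]
    nth_rewrite 1 [ih]
    ring

lemma jW_lt {p q i : ℕ} (hq : 0 < q) : jW p q i < q := by
  haveI : NeZero q := ⟨hq.ne'⟩
  exact ZMod.val_lt _

lemma encode_inj {q kk ll : ℕ} {j : ℕ → ℕ} (hll : 2 ≤ ll)
    (hj : ∀ i, j i < q)
    {i i' t t' c c' x x' : ℕ}
    (hi : i < q) (hi' : i' < q) (ht : t < kk) (ht' : t' < kk)
    (hc : c < ll - 1) (hc' : c' < ll - 1) (hx : x < q) (hx' : x' < q)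
    (h : blockOffset q kk ll j i t c + x = blockOffset q kk ll j i' t' c' + x') :
    i = i' ∧ t = t' ∧ c = c' ∧ x = x' := by
  unfold blockOffset at h
  have hji := hj i
  have hji' := hj i'
  have hR : q - j i + c * q + x < ll * q := by
    have h2 : (c + 2) * q ≤ ll * q := Nat.mul_le_mul_right q (by omega)
    have e : (c + 2) * q = c * q + q + q := by ring
    omega
  have hR' : q - j i' + c' * q + x' < ll * q := by
    have h2 : (c' + 2) * q ≤ ll * q := Nat.mul_le_mul_right q (by omega)
    have e : (c' + 2) * q = c' * q + q + q := by ring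
    omega
  have h1 : (i * kk + t) * (ll * q) + (q - j i + c * q + x)
      = (i' * kk + t') * (ll * q) + (q - j i' + c' * q + x') := by omega
  obtain ⟨hA, hRR⟩ := euclid hR hR' h1
  have hit : i = i' ∧ t = t' := euclid ht ht' (by omega)
  obtain ⟨hii, htt⟩ := hit
  subst hii
  have h3 : c * q + x = c' * q + x' := by omega
  have hcx := euclid hx hx' h3
  exact ⟨rfl, htt, hcx.1, hcx.2⟩

lemma mem_markPos_succ {k l : ℕ → ℕ} {n : ℕ} {J : ℕ → ℕ} {d v : ℕ} :
    v ∈ markPos k l n J (d + 1) ↔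
      ∃ i < qSeq k l (n + d), ∃ c < l (n + d) - 1, ∃ x ∈ markPos k l n J d,
        v = blockOffset (qSeq k l (n + d)) (k (n + d)) (l (n + d))
              (jW (pSeq k l (n + d)) (qSeq k l (n + d))) i (J (n + d)) c + x := by
  constructor
  · intro hv
    simp only [markPos, Finset.mem_biUnion, Finset.mem_product, Finset.mem_range,
      Finset.mem_image, Prod.exists] at hv
    obtain ⟨i, c, ⟨hi, hc⟩, x, hx, rfl⟩ := hv
    exact ⟨i, hi, c, hc, x, hx, rfl⟩
  · rintro ⟨i, hi, c, hc, x, hx, rfl⟩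
    simp only [markPos, Finset.mem_biUnion, Finset.mem_product, Finset.mem_range,
      Finset.mem_image, Prod.exists]
    exact ⟨i, c, ⟨hi, hc⟩, x, hx, rfl⟩

lemma markPos_bound (k l : ℕ → ℕ) (hk : ∀ r, 2 ≤ k r) (hl : ∀ r, 2 ≤ l r) (n : ℕ) :
    ∀ (d : ℕ) (J : ℕ → ℕ), (∀ r, n ≤ r → r < n + d → J r < k r) →
      ∀ x ∈ markPos k l n J d, x + qSeq k l n ≤ qSeq k l (n + d) := by
  intro d
  induction d with
  | zero =>
    intro J _ x hx
    simp only [markPos, Finset.mem_singleton] at hx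
    subst hx
    simp
  | succ d ih =>
    intro J hJ v hv
    rw [mem_markPos_succ] at hv
    obtain ⟨i, hi, c, hc, y, hy, rfl⟩ := hv
    set q := qSeq k l (n + d) with hqdef
    set kk := k (n + d)
    set ll := l (n + d)
    set t := J (n + d) with htdef
    have hyb : y + qSeq k l n ≤ q := ih J (fun r h1 h2 => hJ r h1 (by omega)) y hy
    have ht : t < kk := hJ _ (by omega) (by omega)
    have hllb : 2 ≤ ll := hl _
    have h1 : i * kk + t + 1 ≤ q * kk := by
      have h2 : (i + 1) * kk ≤ q * kk := Nat.mul_le_mul_right kk (by omega)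
      have e : (i + 1) * kk = i * kk + kk := by ring
      omega
    have hgoal : qSeq k l (n + (d + 1)) = kk * ll * q ^ 2 := rfl
    rw [hgoal]
    unfold blockOffset
    have hsub : q - jW (pSeq k l (n + d)) q i ≤ q := Nat.sub_le _ _
    have h2 : (c + 2) * q ≤ ll * q := Nat.mul_le_mul_right q (by omega)
    have e2 : (c + 2) * q = c * q + q + q := by ring
    have h3 : (i * kk + t) * (ll * q) + ll * q = (i * kk + t + 1) * (ll * q) := by ring
    have h4 : (i * kk + t + 1) * (ll * q) ≤ (q * kk) * (ll * q) := Nat.mul_le_mul_right _ h1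
    have e5 : (q * kk) * (ll * q) = kk * ll * q ^ 2 := by ring
    omega

lemma markPos_lt (k l : ℕ → ℕ) (hk : ∀ r, 2 ≤ k r) (hl : ∀ r, 2 ≤ l r) (n d : ℕ)
    (J : ℕ → ℕ) (hJ : ∀ r, n ≤ r → r < n + d → J r < k r) :
    ∀ x ∈ markPos k l n J d, x < qSeq k l (n + d) := by
  intro x hx
  have h1 := markPos_bound k l hk hl n d J hJ x hx
  have h2 := qSeq_pos k l hk hl n
  omega

lemma markPos_inj (k l : ℕ → ℕ) (hk : ∀ r, 2 ≤ k r) (hl : ∀ r, 2 ≤ l r) (n : ℕ) :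
    ∀ (d : ℕ) (J J' : ℕ → ℕ),
      (∀ r, n ≤ r → r < n + d → J r < k r) →
      (∀ r, n ≤ r → r < n + d → J' r < k r) →
      ∀ v, v ∈ markPos k l n J d → v ∈ markPos k l n J' d →
        ∀ r, n ≤ r → r < n + d → J r = J' r := by
  intro d
  induction d with
  | zero => intro J J' _ _ v _ _ r h1 h2; omega
  | succ d ih =>
    intro J J' hJ hJ' v hv hv' r hr1 hr2
    rw [mem_markPos_succ] at hv hv'
    obtain ⟨i, hi, c, hc, x, hx, rfl⟩ := hv
    obtain ⟨i', hi', c', hc', x', hx', heq⟩ := hv'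
    have hJd : ∀ r, n ≤ r → r < n + d → J r < k r := fun r h1 h2 => hJ r h1 (by omega)
    have hJd' : ∀ r, n ≤ r → r < n + d → J' r < k r := fun r h1 h2 => hJ' r h1 (by omega)
    have hxlt := markPos_lt k l hk hl n d J hJd x hx
    have hxlt' := markPos_lt k l hk hl n d J' hJd' x' hx'
    have hq := qSeq_pos k l hk hl (n + d)
    obtain ⟨hii, htt, hcc, hxx⟩ := encode_inj (hl (n + d)) (fun i => jW_lt hq)
      hi hi' (hJ _ (by omega) (by omega)) (hJ' _ (by omega) (by omega)) hc hc' hxlt hxlt' heq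
    rcases Nat.lt_or_ge r (n + d) with h | h
    · exact ih J J' hJd hJd' x hx (hxx ▸ hx') r hr1 h
    · have : r = n + d := by omega
      rw [this]; exact htt

lemma markPos_card (k l : ℕ → ℕ) (hk : ∀ r, 2 ≤ k r) (hl : ∀ r, 2 ≤ l r) (n : ℕ) :
    ∀ (d : ℕ) (J : ℕ → ℕ), (∀ r, n ≤ r → r < n + d → J r < k r) →
      (markPos k l n J d).card
        = ∏ r ∈ Finset.Ico n (n + d), (qSeq k l r * (l r - 1)) := by
  intro d
  induction d with
  | zero => intro J _; simp [markPos]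
  | succ d ih =>
    intro J hJ
    have hJd : ∀ r, n ≤ r → r < n + d → J r < k r := fun r h1 h2 => hJ r h1 (by omega)
    have hq := qSeq_pos k l hk hl (n + d)
    have hxlt := markPos_lt k l hk hl n d J hJd
    have hdisj : ∀ ic ∈ (Finset.range (qSeq k l (n + d)) ×ˢ Finset.range (l (n + d) - 1)),
        ∀ ic' ∈ (Finset.range (qSeq k l (n + d)) ×ˢ Finset.range (l (n + d) - 1)),
        ic ≠ ic' →
        Disjoint
          ((markPos k l n J d).image fun x =>
            blockOffset (qSeq k l (n + d)) (k (n + d)) (l (n + d))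
              (jW (pSeq k l (n + d)) (qSeq k l (n + d))) ic.1 (J (n + d)) ic.2 + x)
          ((markPos k l n J d).image fun x =>
            blockOffset (qSeq k l (n + d)) (k (n + d)) (l (n + d))
              (jW (pSeq k l (n + d)) (qSeq k l (n + d))) ic'.1 (J (n + d)) ic'.2 + x) := by
      intro ic hic ic' hic' hne
      simp only [Finset.mem_product, Finset.mem_range] at hic hic'
      rw [Finset.disjoint_left]
      rintro a ha ha'
      simp only [Finset.mem_image] at ha ha'
      obtain ⟨x, hx, rfl⟩ := ha
      obtain ⟨x', hx', heq⟩ := ha'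
      obtain ⟨h1, h2, h3, h4⟩ := encode_inj (hl (n + d)) (fun i => jW_lt hq)
        hic.1 hic'.1 (hJ _ (by omega) (by omega)) (hJ _ (by omega) (by omega))
        hic.2 hic'.2 (hxlt x hx) (hxlt x' hx') heq.symm
      exact hne (Prod.ext h1 h3)
    show ((Finset.range (qSeq k l (n + d)) ×ˢ Finset.range (l (n + d) - 1)).biUnion _).card = _
    rw [Finset.card_biUnion hdisj]
    have hconst : ∀ ic ∈ (Finset.range (qSeq k l (n + d)) ×ˢ Finset.range (l (n + d) - 1)),
        (((markPos k l n J d).image fun x =>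
            blockOffset (qSeq k l (n + d)) (k (n + d)) (l (n + d))
              (jW (pSeq k l (n + d)) (qSeq k l (n + d))) ic.1 (J (n + d)) ic.2 + x)).card
          = (markPos k l n J d).card := by
      intro ic _
      exact Finset.card_image_of_injective _ (add_right_injective _)
    rw [Finset.sum_congr rfl hconst, Finset.sum_const, Finset.card_product,
      Finset.card_range, Finset.card_range, ih J hJd, smul_eq_mul,
      show n + (d + 1) = (n + d) + 1 from rfl,
      Finset.prod_Ico_succ_top (Nat.le_add_right n d)]
    ring

lemma sum_lt (k : ℕ → ℕ) (hk : ∀ r, 2 ≤ k r) {n m : ℕ} (h : n ≤ m) (J : ℕ → ℕ)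
    (hJ : ∀ r ∈ Finset.Ico n m, J r < k r) :
    (∑ r ∈ Finset.Ico n m, J r * KSeq k r) + KSeq k n ≤ KSeq k m := by
  induction m, h using Nat.le_induction with
  | base => simp
  | succ m hm ih =>
    rw [Finset.sum_Ico_succ_top hm]
    have h1 := ih (fun r hr => hJ r (by simp only [Finset.mem_Ico] at hr ⊢; omega))
    have h2 : J m + 1 ≤ k m := hJ m (by simp only [Finset.mem_Ico]; omega)
    have h3 : (J m + 1) * KSeq k m ≤ k m * KSeq k m := Nat.mul_le_mul_right _ h2
    have e : (J m + 1) * KSeq k m = J m * KSeq k m + KSeq k m := by ring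
    have e2 : KSeq k (m + 1) = KSeq k m * k m := rfl
    have e3 : KSeq k m * k m = k m * KSeq k m := Nat.mul_comm _ _
    omega

lemma digits_eq (k : ℕ → ℕ) (hk : ∀ r, 2 ≤ k r) (n : ℕ) :
    ∀ (m : ℕ) (J J' : ℕ → ℕ),
      (∀ r ∈ Finset.Ico n m, J r < k r) → (∀ r ∈ Finset.Ico n m, J' r < k r) →
      (∑ r ∈ Finset.Ico n m, J r * KSeq k r) = (∑ r ∈ Finset.Ico n m, J' r * KSeq k r) →
      ∀ r ∈ Finset.Ico n m, J r = J' r := by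
  intro m
  induction m with
  | zero => intro J J' _ _ _ r hr; simp at hr
  | succ m ih =>
    intro J J' hJ hJ' hsum r hr
    by_cases hmn : n ≤ m
    · rw [Finset.sum_Ico_succ_top hmn, Finset.sum_Ico_succ_top hmn] at hsum
      have hJm : ∀ r ∈ Finset.Ico n m, J r < k r :=
        fun r hr => hJ r (by simp only [Finset.mem_Ico] at hr ⊢; omega)
      have hJm' : ∀ r ∈ Finset.Ico n m, J' r < k r :=
        fun r hr => hJ' r (by simp only [Finset.mem_Ico] at hr ⊢; omega)
      have b1 := sum_lt k hk hmn J hJm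
      have b2 := sum_lt k hk hmn J' hJm'
      have hKn := KSeq_pos k hk n
      have hlt1 : (∑ r ∈ Finset.Ico n m, J r * KSeq k r) < KSeq k m := by omega
      have hlt2 : (∑ r ∈ Finset.Ico n m, J' r * KSeq k r) < KSeq k m := by omega
      obtain ⟨hm_eq, hs_eq⟩ := euclid (a := J m) (b := J' m) hlt1 hlt2 (by omega)
      simp only [Finset.mem_Ico] at hr
      rcases Nat.lt_or_ge r m with h | h
      · exact ih J J' hJm hJm' hs_eq r (by simp only [Finset.mem_Ico]; omega)
      · have : r = m := by omega
        rw [this]; exact hm_eq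
    · exfalso
      simp only [Finset.mem_Ico] at hr
      omega


open Classical in
/-- Density of genetic-marker locations: fix `n ≤ m` and a set `S` of `(n,m)`-genetic markers
(functions `J` with `J r < k_r` for `n ≤ r < m`, normalized to `0` off `[n,m)`), let
`g = ∏_{i=n}^{m−1} k_i` be the total number of `(n,m)`-genetic markers and `d = |S|/g`. The
`n`-subword of a word `w ∈ W_m` with marker `J` begins at `Σ_{r=n}^{m−1} J r · K_r`, and the
designated `n`-subwords of `w^c = c_m(w)` with marker `J` begin at the positions of
`markPos k l n J (m−n)`. Then `|A|/K_m = d/K_n` and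
`|A^c|/q_m = (d/q_n)·∏_{p=n}^{m−1}(1 − 1/l_p)`. -/
theorem genetic_marker_density
    (k l : ℕ → ℕ) (hk : ∀ n, 2 ≤ k n) (hl : ∀ n, 2 ≤ l n)
    (hsum : Summable fun n => (1 : ℝ) / l n)
    (n m : ℕ) (hnm : n ≤ m)
    (S : Finset (ℕ → ℕ))
    (hS : ∀ J ∈ S, (∀ r, n ≤ r → r < m → J r < k r) ∧
      (∀ r, r < n ∨ m ≤ r → J r = 0)) :
    (((S.image fun J => ∑ r ∈ Finset.Ico n m, J r * KSeq k r).card : ℝ) / KSeq k m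
        = ((S.card : ℝ) / ∏ i ∈ Finset.Ico n m, (k i : ℝ)) / KSeq k n) ∧
    (((S.biUnion fun J => markPos k l n J (m - n)).card : ℝ) / qSeq k l m
        = ((S.card : ℝ) / ∏ i ∈ Finset.Ico n m, (k i : ℝ)) / qSeq k l n
            * ∏ i ∈ Finset.Ico n m, (1 - 1 / (l i : ℝ))) := by
  have hA0 : (∏ i ∈ Finset.Ico n m, (k i : ℝ)) ≠ 0 :=
    Finset.prod_ne_zero_iff.mpr fun i _ => Nat.cast_ne_zero.mpr (by have := hk i; omega)
  have hB0 : (∏ i ∈ Finset.Ico n m, (l i : ℝ)) ≠ 0 :=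
    Finset.prod_ne_zero_iff.mpr fun i _ => Nat.cast_ne_zero.mpr (by have := hl i; omega)
  have hC0 : (∏ i ∈ Finset.Ico n m, (qSeq k l i : ℝ)) ≠ 0 :=
    Finset.prod_ne_zero_iff.mpr fun i _ =>
      Nat.cast_ne_zero.mpr (qSeq_pos k l hk hl i).ne'
  have hKn0 : (KSeq k n : ℝ) ≠ 0 := Nat.cast_ne_zero.mpr (KSeq_pos k hk n).ne'
  have hqn0 : (qSeq k l n : ℝ) ≠ 0 := Nat.cast_ne_zero.mpr (qSeq_pos k l hk hl n).ne'
  constructor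
  · -- odometer part
    have hinj : Set.InjOn (fun J : ℕ → ℕ => ∑ r ∈ Finset.Ico n m, J r * KSeq k r) S := by
      intro J hJm J' hJ'm heq
      have hJm' := Finset.mem_coe.mp hJm
      have hJ'm' := Finset.mem_coe.mp hJ'm
      replace heq : (∑ r ∈ Finset.Ico n m, J r * KSeq k r)
          = ∑ r ∈ Finset.Ico n m, J' r * KSeq k r := heq
      clear hJm hJ'm
      funext r
      by_cases hr : n ≤ r ∧ r < m
      · exact digits_eq k hk n m J J'
          (fun r hr => (hS J hJm').1 r (Finset.mem_Ico.mp hr).1 (Finset.mem_Ico.mp hr).2)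
          (fun r hr => (hS J' hJ'm').1 r (Finset.mem_Ico.mp hr).1 (Finset.mem_Ico.mp hr).2)
          heq r (Finset.mem_Ico.mpr hr)
      · have h1 : r < n ∨ m ≤ r := by omega
        rw [(hS J hJm').2 r h1, (hS J' hJ'm').2 r h1]
    have hcast : (KSeq k m : ℝ) = (KSeq k n : ℝ) * ∏ i ∈ Finset.Ico n m, (k i : ℝ) := by
      rw [KSeq_prod k hnm]
      push_cast
      ring
    rw [Finset.card_image_of_injOn hinj, hcast, div_div,
      mul_comm (∏ i ∈ Finset.Ico n m, (k i : ℝ)) (KSeq k n : ℝ)]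
  · -- circular part
    have hbound : ∀ J ∈ S, ∀ r, n ≤ r → r < n + (m - n) → J r < k r :=
      fun J hJ r h1 h2 => (hS J hJ).1 r h1 (by omega)
    have hdisj : ∀ J ∈ S, ∀ J' ∈ S, J ≠ J' →
        Disjoint (markPos k l n J (m - n)) (markPos k l n J' (m - n)) := by
      intro J hJm J' hJ'm hne
      rw [Finset.disjoint_left]
      intro v hv hv'
      apply hne
      funext r
      by_cases hr : n ≤ r ∧ r < m
      · exact markPos_inj k l hk hl n (m - n) J J' (hbound J hJm) (hbound J' hJ'm)
          v hv hv' r hr.1 (by omega)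
      · rw [(hS J hJm).2 r (by omega), (hS J' hJ'm).2 r (by omega)]
    have hmn' : n + (m - n) = m := by omega
    have hcard : (S.biUnion fun J => markPos k l n J (m - n)).card
        = S.card * ∏ r ∈ Finset.Ico n m, (qSeq k l r * (l r - 1)) := by
      rw [Finset.card_biUnion hdisj,
        Finset.sum_congr rfl (fun J hJm => by
          rw [markPos_card k l hk hl n (m - n) J (hbound J hJm), hmn']),
        Finset.sum_const, smul_eq_mul]
    have hprodcast : ((∏ r ∈ Finset.Ico n m, (qSeq k l r * (l r - 1)) : ℕ) : ℝ)
        = (∏ r ∈ Finset.Ico n m, (qSeq k l r : ℝ))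
            * ∏ r ∈ Finset.Ico n m, ((l r : ℝ) - 1) := by
      rw [Nat.cast_prod, ← Finset.prod_mul_distrib]
      refine Finset.prod_congr rfl fun r _ => ?_
      have h1 : 1 ≤ l r := by have := hl r; omega
      rw [Nat.cast_mul, Nat.cast_sub h1, Nat.cast_one]
    have hqmcast : (qSeq k l m : ℝ) = (qSeq k l n : ℝ)
        * ((∏ i ∈ Finset.Ico n m, (k i : ℝ)) * (∏ i ∈ Finset.Ico n m, (l i : ℝ))
            * (∏ i ∈ Finset.Ico n m, (qSeq k l i : ℝ))) := by
      rw [qSeq_prod k l hnm, Nat.cast_mul, Nat.cast_prod,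
        Finset.prod_congr rfl (fun r _ => by
          rw [Nat.cast_mul, Nat.cast_mul] :
            ∀ r ∈ Finset.Ico n m, ((k r * l r * qSeq k l r : ℕ) : ℝ)
              = (k r : ℝ) * (l r : ℝ) * (qSeq k l r : ℝ)),
        ← Finset.prod_mul_distrib, ← Finset.prod_mul_distrib]
    have hprodinv : (∏ i ∈ Finset.Ico n m, (1 - 1 / (l i : ℝ)))
        = (∏ i ∈ Finset.Ico n m, ((l i : ℝ) - 1)) / ∏ i ∈ Finset.Ico n m, (l i : ℝ) := by
      rw [← Finset.prod_div_distrib]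
      refine Finset.prod_congr rfl fun i _ => ?_
      have h0 : (l i : ℝ) ≠ 0 := Nat.cast_ne_zero.mpr (by have := hl i; omega)
      field_simp
    rw [hcard, Nat.cast_mul, hprodcast, hqmcast, hprodinv]
    field_simp


end Stmt10
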